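/- arXiv:1210.2251 — 4 statements merged into one kernel-verified Lean document; each statement's English description precedes it below -/
import Mathlib

section
/- Let C ⊆ 𝒳 be measurable and ε > 0 with (1+ε)·F̃(C) < 1. Then inf{ H(G∣F̃) : G a probability measure on 𝒳 with dG/dF̃ ≥ 1+ε F̃-almost everywhere on C } = γ⁺_ε(F̃(C)). Moreover, the infimum is attained by the probability measure G* whose density with respect to F̃ equals 1+ε on C and equals (1−(1+ε)F̃(C))/(1−F̃(C)) on the complement of C. -/
/-!
Put `s = F̃(C)`, `b = (1 - (1+ε)s)/(1-s)` and let `f` be the density equal to `1+ε` on `C` and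
`b` off `C`; then `∫ f dF̃ = 1`, so `G* = f F̃` is admissible with `H(G*∣F̃) = γ⁺_ε(s)`.
For admissible `G` with density `g`, integrating the tangent-line bound
`log f ≤ log g + f/g - 1` against `G` and using `∫ f/g dG ≤ ∫ f dF̃ = 1` gives Gibbs' inequality
`∫ log f dG ≤ H(G∣F̃)`. The left side is `G(C) log(1+ε) + (1 - G(C)) log b`, nondecreasing in
`G(C)` since `b ≤ 1+ε`, and `G(C) ≥ (1+ε)s` by the constraint; at `G(C) = (1+ε)s` it is `γ⁺_ε(s)`.
-/

open MeasureTheory Filter Topology ENNReal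
open scoped Classical

noncomputable section

/-- Relative entropy (Kullback–Leibler divergence) `H(G ∣ μ) = ∫ log(dG/dμ) dG` when `G ≪ μ`
(and the integrand is `G`-integrable), `+∞` otherwise. -/
def KL {X : Type*} [MeasurableSpace X] (G μ : Measure X) : ℝ≥0∞ :=
  if G ≪ μ ∧ Integrable (fun x => Real.log ((G.rnDeriv μ) x).toReal) G then
    ENNReal.ofReal (∫ x, Real.log ((G.rnDeriv μ) x).toReal ∂G)
  else ⊤

/-- `γ⁺_ε(s)` -/
def gammaPlus (ε s : ℝ) : ℝ :=
  (1 + ε) * s * Real.log (1 + ε)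
    + (1 - (1 + ε) * s) * Real.log ((1 - (1 + ε) * s) / (1 - s))

open Real

section

variable {X : Type*} [MeasurableSpace X] {μ G : Measure X}

lemma lintegral_ofReal_div_rnDeriv_le [G.HaveLebesgueDecomposition μ] (hac : G ≪ μ)
    {f : X → ℝ} (hf : Measurable f) (hf_nonneg : ∀ x, 0 ≤ f x) :
    ∫⁻ x, ENNReal.ofReal (f x / (G.rnDeriv μ x).toReal) ∂G ≤ ∫⁻ x, ENNReal.ofReal (f x) ∂μ := by
  have hmeas : Measurable fun x => ENNReal.ofReal (f x / (G.rnDeriv μ x).toReal) :=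
    (hf.div (Measure.measurable_rnDeriv G μ).ennreal_toReal).ennreal_ofReal
  rw [← lintegral_rnDeriv_mul hac hmeas.aemeasurable]
  refine lintegral_mono fun x => ?_
  by_cases htop : G.rnDeriv μ x = ⊤
  · simp [htop]
  rw [← ENNReal.ofReal_toReal htop, ← ENNReal.ofReal_mul ENNReal.toReal_nonneg,
    ENNReal.toReal_ofReal ENNReal.toReal_nonneg]
  refine ENNReal.ofReal_le_ofReal ?_
  rcases eq_or_ne (G.rnDeriv μ x).toReal 0 with h0 | h0
  · simp [h0, hf_nonneg x]
  · rw [mul_div_cancel₀ _ h0]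

lemma integral_log_le_integral_llr [IsProbabilityMeasure G] [G.HaveLebesgueDecomposition μ]
    (hac : G ≪ μ) (hllr : Integrable (llr G μ) G) {f : X → ℝ} (hf : Measurable f)
    (hf_pos : ∀ x, 0 < f x) (hf_lintegral : ∫⁻ x, ENNReal.ofReal (f x) ∂μ ≤ 1)
    (hlogf : Integrable (fun x => log (f x)) G) :
    ∫ x, log (f x) ∂G ≤ ∫ x, llr G μ x ∂G := by
  set g : X → ℝ := fun x => (G.rnDeriv μ x).toReal
  have hfg_nonneg : 0 ≤ᵐ[G] fun x => f x / g x :=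
    Eventually.of_forall fun x => div_nonneg (hf_pos x).le ENNReal.toReal_nonneg
  have hfg_meas : AEStronglyMeasurable (fun x => f x / g x) G :=
    (hf.div (Measure.measurable_rnDeriv G μ).ennreal_toReal).aestronglyMeasurable
  have hfg_lintegral := (lintegral_ofReal_div_rnDeriv_le hac hf fun x => (hf_pos x).le).trans
    hf_lintegral
  have hfg_int : Integrable (fun x => f x / g x) G :=
    ⟨hfg_meas, (hasFiniteIntegral_iff_ofReal hfg_nonneg).2 (hfg_lintegral.trans_lt one_lt_top)⟩
  have hfg_le : ∫ x, f x / g x ∂G ≤ 1 := by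
    rw [integral_eq_lintegral_of_nonneg_ae hfg_nonneg hfg_meas]
    exact ENNReal.toReal_le_of_le_ofReal zero_le_one (by simpa using hfg_lintegral)
  -- `log` lies below its tangent line at `g x`
  have htangent : ∀ᵐ x ∂G, log (f x) + 1 - f x / g x ≤ llr G μ x := by
    filter_upwards [Measure.rnDeriv_pos hac, hac.ae_le (Measure.rnDeriv_lt_top G μ)]
      with x hpos hlt
    have hg : 0 < g x := ENNReal.toReal_pos hpos.ne' hlt.ne
    have := log_le_sub_one_of_pos (div_pos (hf_pos x) hg)
    rw [log_div (hf_pos x).ne' hg.ne'] at this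
    rw [llr_def]
    linarith
  have hlogf_add : Integrable (fun x => log (f x) + 1) G := hlogf.add (integrable_const 1)
  calc ∫ x, log (f x) ∂G ≤ ∫ x, log (f x) ∂G + 1 - ∫ x, f x / g x ∂G := by linarith
    _ = ∫ x, (log (f x) + 1 - f x / g x) ∂G := by
      rw [integral_sub hlogf_add hfg_int, integral_add hlogf (integrable_const 1)]
      simp
    _ ≤ ∫ x, llr G μ x ∂G := integral_mono_ae (hlogf_add.sub hfg_int) hllr htangent

lemma KL_withDensity_ofReal [SigmaFinite μ] {f : X → ℝ} (hf : Measurable f)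
    (hf_nonneg : ∀ x, 0 ≤ f x)
    (hlogf : Integrable (fun x => log (f x)) (μ.withDensity fun x => ENNReal.ofReal (f x))) :
    KL (μ.withDensity fun x => ENNReal.ofReal (f x)) μ
      = ENNReal.ofReal (∫ x, log (f x) ∂(μ.withDensity fun x => ENNReal.ofReal (f x))) := by
  have hac := withDensity_absolutelyContinuous μ fun x => ENNReal.ofReal (f x)
  have hllr : (fun x => log ((μ.withDensity fun x => ENNReal.ofReal (f x)).rnDeriv μ x).toReal)
      =ᵐ[μ.withDensity fun x => ENNReal.ofReal (f x)] fun x => log (f x) := by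
    filter_upwards [hac.ae_le (Measure.rnDeriv_withDensity μ hf.ennreal_ofReal)] with x hx
    rw [hx, ENNReal.toReal_ofReal (hf_nonneg x)]
  rw [KL, if_pos ⟨hac, hlogf.congr hllr.symm⟩, integral_congr_ae hllr]

lemma ofReal_mul_le_of_le_rnDeriv {C : Set X} {c : ℝ}
    (h : ∀ᵐ x ∂μ, x ∈ C → c ≤ (G.rnDeriv μ x).toReal) :
    ENNReal.ofReal c * μ C ≤ G C :=
  calc ENNReal.ofReal c * μ C = ∫⁻ _ in C, ENNReal.ofReal c ∂μ := (setLIntegral_const C _).symm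
    _ ≤ ∫⁻ x in C, G.rnDeriv μ x ∂μ :=
      setLIntegral_mono_ae (Measure.measurable_rnDeriv G μ).aemeasurable
        (h.mono fun _ hx hxC => ENNReal.ofReal_le_of_le_toReal (hx hxC))
    _ ≤ G C := Measure.setLIntegral_rnDeriv_le C

end

section TwoValued

variable {X : Type*} [MeasurableSpace X] {μ G : Measure X} {C : Set X}

lemma withDensity_ofReal_ite_apply (hC : MeasurableSet C) (a b : ℝ) :
    μ.withDensity (fun x => ENNReal.ofReal (if x ∈ C then a else b)) C
      = ENNReal.ofReal a * μ C := by
  rw [withDensity_apply _ hC, setLIntegral_congr_fun hC fun x hx => by rw [if_pos hx],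
    setLIntegral_const]

lemma withDensity_ofReal_ite_apply_compl (hC : MeasurableSet C) (a b : ℝ) :
    μ.withDensity (fun x => ENNReal.ofReal (if x ∈ C then a else b)) Cᶜ
      = ENNReal.ofReal b * μ Cᶜ := by
  rw [withDensity_apply _ hC.compl, setLIntegral_congr_fun hC.compl fun x hx => by rw [if_neg hx],
    setLIntegral_const]

lemma integrable_ite_const [IsFiniteMeasure G] (hC : MeasurableSet C) (a b : ℝ) :
    Integrable (fun x => if x ∈ C then a else b) G :=
  Integrable.piecewise (f := fun _ => a) (g := fun _ => b) hC (integrable_const a).integrableOn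
    (integrable_const b).integrableOn

lemma integral_ite_const [IsFiniteMeasure G] (hC : MeasurableSet C) (a b : ℝ) :
    ∫ x, (if x ∈ C then a else b) ∂G = G.real C * a + G.real Cᶜ * b :=
  (integral_piecewise (f := fun _ => a) (g := fun _ => b) hC (integrable_const a).integrableOn
    (integrable_const b).integrableOn).trans (by simp only [setIntegral_const, smul_eq_mul])

lemma measurable_ite_const (hC : MeasurableSet C) (a b : ℝ) :
    Measurable fun x => if x ∈ C then a else b :=
  Measurable.ite hC measurable_const measurable_const

lemma toReal_rnDeriv_withDensity_ofReal_ite [SigmaFinite μ] (hC : MeasurableSet C) {a : ℝ}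
    (ha : 0 ≤ a) (b : ℝ) :
    ∀ᵐ x ∂μ, x ∈ C →
      ((μ.withDensity fun x => ENNReal.ofReal (if x ∈ C then a else b)).rnDeriv μ x).toReal
        = a := by
  filter_upwards [Measure.rnDeriv_withDensity μ (measurable_ite_const hC a b).ennreal_ofReal]
    with x hx hxC
  rw [hx, if_pos hxC, ENNReal.toReal_ofReal ha]

variable [IsProbabilityMeasure μ] {a b : ℝ}

lemma isProbabilityMeasure_withDensity_ofReal_ite (hC : MeasurableSet C) (ha : 0 ≤ a)
    (hb : 0 ≤ b) (hab : a * μ.real C + b * (1 - μ.real C) = 1) :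
    IsProbabilityMeasure (μ.withDensity fun x => ENNReal.ofReal (if x ∈ C then a else b)) := by
  constructor
  rw [← measure_add_measure_compl hC, withDensity_ofReal_ite_apply hC,
    withDensity_ofReal_ite_apply_compl hC, ← ofReal_measureReal, ← ofReal_measureReal,
    probReal_compl_eq_one_sub hC, ← ENNReal.ofReal_mul ha, ← ENNReal.ofReal_mul hb,
    ← ENNReal.ofReal_add (by positivity) (mul_nonneg hb (by simp)), hab, ENNReal.ofReal_one]

lemma KL_withDensity_ofReal_ite (hC : MeasurableSet C) (ha : 0 ≤ a) (hb : 0 ≤ b)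
    (hab : a * μ.real C + b * (1 - μ.real C) = 1) :
    KL (μ.withDensity fun x => ENNReal.ofReal (if x ∈ C then a else b)) μ
      = ENNReal.ofReal (a * μ.real C * log a + (1 - a * μ.real C) * log b) := by
  have := isProbabilityMeasure_withDensity_ofReal_ite hC ha hb hab
  have hGC : (μ.withDensity fun x => ENNReal.ofReal (if x ∈ C then a else b)).real C
      = a * μ.real C := by
    rw [measureReal_def, withDensity_ofReal_ite_apply hC, ENNReal.toReal_mul,
      ENNReal.toReal_ofReal ha, measureReal_def]
  have hlog : (fun x => log (if x ∈ C then a else b)) = fun x => if x ∈ C then log a else log b :=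
    funext fun x => apply_ite Real.log _ _ _
  rw [KL_withDensity_ofReal (measurable_ite_const hC a b)
    (fun x => by split_ifs <;> assumption) (hlog ▸ integrable_ite_const hC _ _), hlog,
    integral_ite_const hC, probReal_compl_eq_one_sub hC, hGC]

lemma ofReal_le_KL_of_le_rnDeriv [IsProbabilityMeasure G] (hC : MeasurableSet C) (hb : 0 < b)
    (hba : b ≤ a) (hab : a * μ.real C + b * (1 - μ.real C) = 1)
    (hG : ∀ᵐ x ∂μ, x ∈ C → a ≤ (G.rnDeriv μ x).toReal) :
    ENNReal.ofReal (a * μ.real C * log a + (1 - a * μ.real C) * log b) ≤ KL G μ := by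
  rw [KL]
  split_ifs with h
  swap
  · exact le_top
  obtain ⟨hac, hllr⟩ := h
  have ha : 0 ≤ a := hb.le.trans hba
  have hGC : a * μ.real C ≤ G.real C := by
    have := ENNReal.toReal_mono (measure_ne_top G C) (ofReal_mul_le_of_le_rnDeriv hG)
    rwa [ENNReal.toReal_mul, ENNReal.toReal_ofReal ha] at this
  have hf_lintegral : ∫⁻ x, ENNReal.ofReal (if x ∈ C then a else b) ∂μ ≤ 1 := by
    have := isProbabilityMeasure_withDensity_ofReal_ite hC ha hb.le hab
    rw [← setLIntegral_univ, ← withDensity_apply _ MeasurableSet.univ, measure_univ]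
  have hgibbs := integral_log_le_integral_llr hac hllr (measurable_ite_const hC a b)
    (fun x => by split_ifs; exacts [hb.trans_le hba, hb]) hf_lintegral
    (by simpa only [apply_ite Real.log] using integrable_ite_const hC (log a) (log b))
  simp only [apply_ite Real.log, integral_ite_const hC, probReal_compl_eq_one_sub hC, llr_def]
    at hgibbs
  have hlog_le : log b ≤ log a := log_le_log hb hba
  refine ENNReal.ofReal_le_ofReal ?_
  nlinarith [mul_nonneg (sub_nonneg.2 hGC) (sub_nonneg.2 hlog_le)]

end TwoValued

theorem stmt4_general {X : Type*} [MeasurableSpace X]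
    (Ftil : Measure X) [IsProbabilityMeasure Ftil]
    (C : Set X) (hC : MeasurableSet C) (ε : ℝ) (hε : 0 < ε)
    (hlt : (1 + ε) * (Ftil C).toReal < 1) :
    sInf { r : ℝ≥0∞ | ∃ G : Measure X, IsProbabilityMeasure G ∧
        (∀ᵐ x ∂Ftil, x ∈ C → 1 + ε ≤ ((G.rnDeriv Ftil) x).toReal) ∧ r = KL G Ftil }
      = ENNReal.ofReal (gammaPlus ε (Ftil C).toReal) ∧
    ∃ Gstar : Measure X,
      Gstar = Ftil.withDensity (fun x => ENNReal.ofReal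
        (if x ∈ C then 1 + ε
         else (1 - (1 + ε) * (Ftil C).toReal) / (1 - (Ftil C).toReal))) ∧
      IsProbabilityMeasure Gstar ∧
      (∀ᵐ x ∂Ftil, x ∈ C → 1 + ε ≤ ((Gstar.rnDeriv Ftil) x).toReal) ∧
      KL Gstar Ftil = ENNReal.ofReal (gammaPlus ε (Ftil C).toReal) := by
  simp only [← measureReal_def] at hlt ⊢
  set s := Ftil.real C
  have hs0 : 0 ≤ s := measureReal_nonneg
  have hs1 : s < 1 := by nlinarith
  set b := (1 - (1 + ε) * s) / (1 - s)
  have ha : 0 ≤ 1 + ε := by linarith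
  have hb0 : 0 < b := div_pos (by linarith) (by linarith)
  have hb1 : b ≤ 1 + ε := ((div_le_one (by linarith)).2 (by nlinarith)).trans (by linarith)
  have hab : (1 + ε) * s + b * (1 - s) = 1 := by
    rw [div_mul_cancel₀ _ (by linarith : 1 - s ≠ 0)]; ring
  have hprob := isProbabilityMeasure_withDensity_ofReal_ite hC ha hb0.le hab
  have hfeasible := (toReal_rnDeriv_withDensity_ofReal_ite (μ := Ftil) hC ha b).mono
    fun x h hx => (h hx).ge
  have hKL := KL_withDensity_ofReal_ite hC ha hb0.le hab
  refine ⟨IsLeast.csInf_eq ⟨⟨_, hprob, hfeasible, hKL.symm⟩, ?_⟩, _, rfl, hprob, hfeasible, hKL⟩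
  rintro r ⟨G, hG, hGC, rfl⟩
  exact ofReal_le_KL_of_le_rnDeriv hC hb0 hb1 hab hGC

theorem stmt4 {X : Type*} [MeasurableSpace X] [MetricSpace X] [CompleteSpace X]
    [TopologicalSpace.SeparableSpace X] [BorelSpace X]
    (Ftil : Measure X) [IsProbabilityMeasure Ftil]
    (C : Set X) (hC : MeasurableSet C) (ε : ℝ) (hε : 0 < ε)
    (hlt : (1 + ε) * (Ftil C).toReal < 1) :
    sInf { r : ℝ≥0∞ | ∃ G : Measure X, IsProbabilityMeasure G ∧
        (∀ᵐ x ∂Ftil, x ∈ C → 1 + ε ≤ ((G.rnDeriv Ftil) x).toReal) ∧ r = KL G Ftil }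
      = ENNReal.ofReal (gammaPlus ε (Ftil C).toReal) ∧
    ∃ Gstar : Measure X,
      Gstar = Ftil.withDensity (fun x => ENNReal.ofReal
        (if x ∈ C then 1 + ε
         else (1 - (1 + ε) * (Ftil C).toReal) / (1 - (Ftil C).toReal))) ∧
      IsProbabilityMeasure Gstar ∧
      (∀ᵐ x ∂Ftil, x ∈ C → 1 + ε ≤ ((Gstar.rnDeriv Ftil) x).toReal) ∧
      KL Gstar Ftil = ENNReal.ofReal (gammaPlus ε (Ftil C).toReal) :=
  stmt4_general Ftil C hC ε hε hlt
end
end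

section
/- For t ≥ 0 let C_t = { x ∈ A : (dF/dF̃)(x) ≥ t }. Let δ > 0 and suppose there exists t̃ > 0 with F(C_{t̃}) = δ. Then inf{ J₊(C) : C ⊆ A measurable with F(C) ≥ δ } = J₊(C_{t̃}), i.e., the infimum over subsets of A of F-measure at least δ is attained by the likelihood-ratio level set C_{t̃}. -/
open MeasureTheory Filter Topology ENNReal
open scoped Classical

noncomputable section

/-- The product `w·f` of the weight function `w = (dF/dF̃)·1_A` and the importance
function `f = 1_A`. -/
def wf {X : Type*} [MeasurableSpace X] (F Ftil : Measure X) (A : Set X) : X → ℝ :=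
  Set.indicator A fun y => ((F.rnDeriv Ftil) y).toReal

/-- `G ∈ Γ ∩ Δ`: `G` is a probability measure with `∫ w f dG < ∞` and `H(G∣F̃) < ∞`. -/
def memGammaDelta {X : Type*} [MeasurableSpace X] (F Ftil : Measure X) (A : Set X)
    (G : Measure X) : Prop :=
  IsProbabilityMeasure G ∧ (∫⁻ x, ENNReal.ofReal (wf F Ftil A x) ∂G) ≠ ⊤ ∧ KL G Ftil ≠ ⊤

/-- `J₊(C)`, with `inf ∅ = ∞`. -/
def Jplus {X : Type*} [MeasurableSpace X] (F Ftil : Measure X) (A : Set X) (ε : ℝ)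
    (C : Set X) : ℝ≥0∞ :=
  sInf { r | ∃ G : Measure X, memGammaDelta F Ftil A G ∧
    (∀ᵐ x ∂Ftil, x ∈ C → 1 + ε ≤ ((G.rnDeriv Ftil) x).toReal) ∧ r = KL G Ftil }

/-- The likelihood-ratio level set `C_t = {x ∈ A : dF/dF̃(x) ≥ t}`. -/
def Ct {X : Type*} [MeasurableSpace X] (F Ftil : Measure X) (A : Set X) (t : ℝ) : Set X :=
  {x ∈ A | ENNReal.ofReal t ≤ (F.rnDeriv Ftil) x}

/-!
By the Neyman–Pearson lemma the level set `C_t̃` has the least `F̃`-mass among the subsets of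
`A` of `F`-mass at least `δ`, so it suffices that `J₊(C)` is an increasing function of
`s = F̃(C)`. In fact `J₊(C) = kl((1+ε)s ‖ s)` when `(1+ε)s ≤ 1` and `J₊(C) = ∞` otherwise. The
upper bound is attained by the measure with density `1+ε` on `C` and a constant density off `C`;
the lower bound, even with `s` replaced by any `s' ≤ s`, is the Donsker–Varadhan inequality for
the test function `l·1_C` with `l` the optimal tilt at `s'`.
-/

/-- `kl((1+ε)s ‖ s)`, the relative entropy of `Bernoulli((1+ε)s)` w.r.t. `Bernoulli(s)`. -/
def tiltKL (ε s : ℝ) : ℝ :=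
  (1 + ε) * s * Real.log (1 + ε)
    + (1 - (1 + ε) * s) * Real.log ((1 - (1 + ε) * s) / (1 - s))

lemma tiltKL_le_of_mul_lt_one {ε st s g : ℝ} (hε : 0 < ε) (hst : 0 ≤ st)
    (hlt : (1 + ε) * st < 1) (hs : st ≤ s) (hg : (1 + ε) * s ≤ g) :
    let l := Real.log ((1 + ε) * (1 - st) / (1 - (1 + ε) * st))
    tiltKL ε st ≤ l * g - Real.log (s * (Real.exp l - 1) + 1) := by
  intro l
  -- `l` is the optimal tilt at `st`: the right-hand side is concave in `s`, equals `tiltKL ε st`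
  -- at `s = st`, and has slope `l * (1 + ε) - ε / (1 - st) ≥ 0` there.
  have hu : 0 < 1 - (1 + ε) * st := by linarith
  have hv : 0 < 1 - st := by nlinarith
  have hexp : Real.exp l - 1 = ε / (1 - (1 + ε) * st) := by
    rw [Real.exp_log (by positivity)]; field_simp; ring
  have hl : 0 ≤ l := Real.log_nonneg (by rw [le_div_iff₀ hu]; nlinarith)
  have hvalue : tiltKL ε st = l * (1 + ε) * st - Real.log ((1 - st) / (1 - (1 + ε) * st)) := by
    simp only [tiltKL, l]
    rw [Real.log_div hv.ne' hu.ne', Real.log_div (by positivity) hu.ne',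
      Real.log_div hu.ne' hv.ne', Real.log_mul (by positivity) hv.ne']
    ring
  set u := 1 - (1 + ε) * st
  set v := 1 - st
  have hsu : 0 < u + s * ε := by nlinarith
  have hla : ε / v ≤ l * (1 + ε) := by
    have h := Real.one_sub_inv_le_log_of_pos (x := (1 + ε) * v / u) (by positivity)
    have : 1 - ((1 + ε) * v / u)⁻¹ = ε / ((1 + ε) * v) := by field_simp; simp only [u, v]; ring
    rw [this, div_le_iff₀ (by positivity)] at h
    rw [div_le_iff₀ hv]; linarith
  have hlog : Real.log ((u + s * ε) / v) ≤ ε * (s - st) / v := by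
    have := Real.log_le_sub_one_of_pos (x := (u + s * ε) / v) (by positivity)
    have h' : (u + s * ε) / v - 1 = ε * (s - st) / v := by field_simp; simp only [u, v]; ring
    linarith
  have hsplit : Real.log ((u + s * ε) / u) = Real.log ((u + s * ε) / v) + Real.log (v / u) := by
    rw [← Real.log_mul (by positivity) (by positivity)]; field_simp
  calc tiltKL ε st = l * (1 + ε) * st - Real.log (v / u) := hvalue
    _ ≤ l * (1 + ε) * s - ε * (s - st) / v - Real.log (v / u) := by
        have := mul_le_mul_of_nonneg_right hla (sub_nonneg.mpr hs)
        rw [div_mul_eq_mul_div] at this; nlinarith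
    _ ≤ l * g - Real.log ((u + s * ε) / u) := by
        have := mul_le_mul_of_nonneg_left hg hl
        rw [hsplit]; nlinarith
    _ = l * g - Real.log (s * (Real.exp l - 1) + 1) := by
        rw [hexp]; congr 2; field_simp; ring

lemma neg_log_le_of_forall {s I : ℝ} (hs : 0 < s) (hs1 : s ≤ 1)
    (h : ∀ l, l - Real.log (s * (Real.exp l - 1) + 1) ≤ I) : -Real.log s ≤ I := by
  have hlim : Tendsto (fun l => -Real.log (s + (1 - s) * Real.exp (-l))) atTop
      (𝓝 (-Real.log s)) := by
    have := (Real.tendsto_exp_neg_atTop_nhds_zero.const_mul (1 - s)).const_add s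
    rw [mul_zero, add_zero] at this
    exact ((Real.continuousAt_log hs.ne').tendsto.comp this).neg
  refine le_of_tendsto' hlim fun l => ?_
  have hpos : 0 < s + (1 - s) * Real.exp (-l) := by positivity
  have hfactor : s * (Real.exp l - 1) + 1 = Real.exp l * (s + (1 - s) * Real.exp (-l)) := by
    rw [Real.exp_neg]; field_simp; ring
  have := h l
  rw [hfactor, Real.log_mul (Real.exp_pos l).ne' hpos.ne', Real.log_exp] at this
  simpa using this

lemma tiltKL_le_of_forall {ε st s g I : ℝ} (hε : 0 < ε) (hst : 0 ≤ st) (hs : st ≤ s)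
    (hg : (1 + ε) * s ≤ g) (hg1 : g ≤ 1)
    (hI : ∀ l, l * g - Real.log (s * (Real.exp l - 1) + 1) ≤ I) : tiltKL ε st ≤ I := by
  rcases (show (1 + ε) * st ≤ 1 by nlinarith).lt_or_eq with hlt | heq
  · exact (tiltKL_le_of_mul_lt_one hε hst hlt hs hg).trans (hI _)
  · -- the optimal tilt is now `l = ∞`, so pass to the limit
    have hs' : s = st := by nlinarith
    have hg' : g = 1 := by nlinarith
    subst hs' hg'
    have hpos : 0 < s := by nlinarith
    have : tiltKL ε s = -Real.log s := by
      rw [tiltKL, heq, sub_self, zero_mul, add_zero, one_mul, ← Real.log_inv,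
        eq_inv_of_mul_eq_one_left heq]
    rw [this]
    exact neg_log_le_of_forall hpos (by nlinarith) fun l => by simpa using hI l

section

variable {X : Type*} [MeasurableSpace X]

lemma KL_of_ac_of_integrable {G μ : Measure X} (hac : G ≪ μ) (hint : Integrable (llr G μ) G) :
    KL G μ = ENNReal.ofReal (∫ x, llr G μ x ∂G) :=
  if_pos ⟨hac, hint⟩

lemma KL_ne_top_iff {G μ : Measure X} : KL G μ ≠ ⊤ ↔ G ≪ μ ∧ Integrable (llr G μ) G := by
  unfold KL
  split_ifs with h
  · exact iff_of_true ENNReal.ofReal_ne_top h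
  · exact iff_of_false (not_not_intro rfl) h

/-- The Donsker–Varadhan bound for the test function `l • 1_C`. -/
lemma mul_measureReal_sub_log_le_integral_llr {μ ν : Measure X} [IsProbabilityMeasure μ]
    [IsProbabilityMeasure ν] (hμν : μ ≪ ν) (hint : Integrable (llr μ ν) μ) {C : Set X}
    (hC : MeasurableSet C) (l : ℝ) :
    l * μ.real C - Real.log (ν.real C * (Real.exp l - 1) + 1) ≤ ∫ x, llr μ ν x ∂μ := by
  set f := C.indicator fun _ => l
  have hexp :
      (fun x => Real.exp (f x)) = fun x => C.indicator (fun _ => Real.exp l - 1) x + 1 := by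
    ext x; by_cases hx : x ∈ C <;> simp [f, hx]
  have hexp_int : Integrable (fun x => Real.exp (f x)) ν := by
    rw [hexp]; exact ((integrable_const _).indicator hC).add (integrable_const 1)
  have : IsProbabilityMeasure (ν.tilted f) := isProbabilityMeasure_tilted hexp_int
  have hgibbs := InformationTheory.integral_llr_add_sub_measure_univ_nonneg
    (hμν.trans (absolutelyContinuous_tilted hexp_int))
    (integrable_llr_tilted_right hμν ((integrable_const l).indicator hC) hint hexp_int)
  rw [integral_llr_tilted_right hμν ((integrable_const l).indicator hC) hexp_int hint, hexp,
    integral_add ((integrable_const _).indicator hC) (integrable_const 1),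
    integral_indicator_const _ hC, integral_indicator_const _ hC] at hgibbs
  simp only [probReal_univ, integral_const, smul_eq_mul, mul_one] at hgibbs
  linarith

lemma mul_measureReal_le_of_le_rnDeriv {G ν : Measure X} [IsFiniteMeasure G] [IsFiniteMeasure ν]
    (hGν : G ≪ ν) {C : Set X} (hC : MeasurableSet C) {c : ℝ}
    (h : ∀ᵐ x ∂ν, x ∈ C → c ≤ (G.rnDeriv ν x).toReal) : c * ν.real C ≤ G.real C := by
  rw [← Measure.setIntegral_toReal_rnDeriv hGν, mul_comm, ← smul_eq_mul, ← setIntegral_const]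
  exact setIntegral_mono_on_ae (integrable_const c).integrableOn
    Measure.integrable_toReal_rnDeriv.integrableOn hC h

lemma mul_measureReal_le_and_le_one {F Ftil G : Measure X} [IsProbabilityMeasure Ftil]
    {A C : Set X} (hC : MeasurableSet C) {ε : ℝ} (hG : memGammaDelta F Ftil A G)
    (hcons : ∀ᵐ x ∂Ftil, x ∈ C → 1 + ε ≤ (G.rnDeriv Ftil x).toReal) :
    (1 + ε) * Ftil.real C ≤ G.real C ∧ G.real C ≤ 1 := by
  have := hG.1
  exact ⟨mul_measureReal_le_of_le_rnDeriv (KL_ne_top_iff.1 hG.2.2).1 hC hcons, measureReal_le_one⟩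

lemma tiltKL_le_Jplus (F Ftil : Measure X) [IsProbabilityMeasure Ftil] (A : Set X) {C : Set X}
    (hC : MeasurableSet C) {ε st : ℝ} (hε : 0 < ε) (hst : 0 ≤ st) (hstC : st ≤ Ftil.real C) :
    ENNReal.ofReal (tiltKL ε st) ≤ Jplus F Ftil A ε C := by
  refine le_sInf ?_
  rintro _ ⟨G, hG, hcons, rfl⟩
  have := hG.1
  obtain ⟨hac, hint⟩ := KL_ne_top_iff.1 hG.2.2
  obtain ⟨hlow, hle⟩ := mul_measureReal_le_and_le_one hC hG hcons
  rw [KL_of_ac_of_integrable hac hint]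
  exact ENNReal.ofReal_le_ofReal <| tiltKL_le_of_forall hε hst hstC hlow hle
    (mul_measureReal_sub_log_le_integral_llr hac hint hC)

lemma Jplus_eq_top (F Ftil : Measure X) [IsProbabilityMeasure Ftil] (A : Set X) {C : Set X}
    (hC : MeasurableSet C) {ε : ℝ} (h : 1 < (1 + ε) * Ftil.real C) :
    Jplus F Ftil A ε C = ⊤ := by
  refine sInf_eq_top.2 ?_
  rintro _ ⟨G, hG, hcons, -⟩
  obtain ⟨hlow, hle⟩ := mul_measureReal_le_and_le_one hC hG hcons
  linarith

lemma integral_ite_mem (ν : Measure X) [IsFiniteMeasure ν] {D : Set X} (hD : MeasurableSet D)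
    (p q : ℝ) : ∫ x, (if x ∈ D then p else q) ∂ν = p * ν.real D + q * ν.real Dᶜ := by
  change ∫ x, D.piecewise (fun _ => p) (fun _ => q) x ∂ν = _
  rw [integral_piecewise hD (integrable_const p).integrableOn (integrable_const q).integrableOn,
    setIntegral_const, setIntegral_const, smul_eq_mul, smul_eq_mul, mul_comm, mul_comm q]

lemma integrable_ite_mem (ν : Measure X) [IsFiniteMeasure ν] {D : Set X} (hD : MeasurableSet D)
    (p q : ℝ) : Integrable (fun x => if x ∈ D then p else q) ν :=
  Integrable.piecewise hD (integrable_const p).integrableOn (integrable_const q).integrableOn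

section

def stepMeasure (ν : Measure X) (D : Set X) (a c : ℝ) : Measure X :=
  ν.withDensity fun x => ENNReal.ofReal (if x ∈ D then a else c)

variable {ν : Measure X} {D : Set X} {a c : ℝ}

lemma toReal_rnDeriv_stepMeasure [SigmaFinite ν] (hD : MeasurableSet D) (ha : 0 ≤ a)
    (hc : 0 ≤ c) :
    (fun x => ((stepMeasure ν D a c).rnDeriv ν x).toReal)
      =ᵐ[ν] fun x => if x ∈ D then a else c := by
  have hm : Measurable fun x => ENNReal.ofReal (if x ∈ D then a else c) :=
    (measurable_const.ite hD measurable_const).ennreal_ofReal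
  filter_upwards [Measure.rnDeriv_withDensity ν hm] with x hx
  rw [stepMeasure, hx, ENNReal.toReal_ofReal (by split_ifs <;> assumption)]

lemma stepMeasure_univ [IsFiniteMeasure ν] (hD : MeasurableSet D) (ha : 0 ≤ a) (hc : 0 ≤ c) :
    stepMeasure ν D a c Set.univ = ENNReal.ofReal (a * ν.real D + c * ν.real Dᶜ) := by
  rw [stepMeasure, withDensity_apply _ MeasurableSet.univ, Measure.restrict_univ,
    ← integral_ite_mem ν hD, ofReal_integral_eq_lintegral_ofReal (integrable_ite_mem ν hD a c)
    (Eventually.of_forall fun x => by dsimp only; split_ifs <;> assumption)]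

lemma stepMeasure_le_smul (ha : c ≤ a) :
    stepMeasure ν D a c ≤ ENNReal.ofReal a • ν := by
  rw [stepMeasure, ← withDensity_const]
  refine withDensity_mono (Eventually.of_forall fun x => ENNReal.ofReal_le_ofReal ?_)
  split_ifs <;> simp [ha]

lemma integral_llr_stepMeasure [IsFiniteMeasure ν] (hD : MeasurableSet D) (ha : 0 ≤ a)
    (hc : 0 ≤ c) :
    Integrable (llr (stepMeasure ν D a c) ν) (stepMeasure ν D a c) ∧
      ∫ x, llr (stepMeasure ν D a c) ν x ∂(stepMeasure ν D a c)
        = a * Real.log a * ν.real D + c * Real.log c * ν.real Dᶜ := by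
  have hac : stepMeasure ν D a c ≪ ν := withDensity_absolutelyContinuous _ _
  have : IsFiniteMeasure (stepMeasure ν D a c) := by
    refine ⟨?_⟩
    rw [stepMeasure_univ hD ha hc]; exact ENNReal.ofReal_lt_top
  have hxlogx : (fun x => ((stepMeasure ν D a c).rnDeriv ν x).toReal
        * Real.log ((stepMeasure ν D a c).rnDeriv ν x).toReal)
      =ᵐ[ν] fun x => if x ∈ D then a * Real.log a else c * Real.log c := by
    filter_upwards [toReal_rnDeriv_stepMeasure hD ha hc] with x hx
    rw [hx]; split_ifs <;> rfl
  refine ⟨(integrable_rnDeriv_mul_log_iff hac).1 ?_, ?_⟩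
  · exact (integrable_ite_mem ν hD _ _).congr hxlogx.symm
  · rw [← integral_rnDeriv_mul_log hac, integral_congr_ae hxlogx, integral_ite_mem ν hD]

end

lemma lintegral_ofReal_wf_ne_top (F Ftil : Measure X) [IsFiniteMeasure F] (A : Set X)
    {G : Measure X} {K : ℝ≥0∞} (hK : K ≠ ⊤) (hG : G ≤ K • Ftil) :
    ∫⁻ x, ENNReal.ofReal (wf F Ftil A x) ∂G ≠ ⊤ := by
  have hwf : ∀ x, ENNReal.ofReal (wf F Ftil A x) ≤ F.rnDeriv Ftil x := fun x => by
    by_cases hx : x ∈ A <;> simp [wf, hx, ENNReal.ofReal_toReal_le]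
  refine ne_top_of_le_ne_top (mul_ne_top hK (measure_ne_top F Set.univ)) ?_
  calc ∫⁻ x, ENNReal.ofReal (wf F Ftil A x) ∂G
      ≤ ∫⁻ x, F.rnDeriv Ftil x ∂(K • Ftil) := lintegral_mono' hG hwf
    _ = K * ∫⁻ x, F.rnDeriv Ftil x ∂Ftil := lintegral_smul_measure K _
    _ ≤ K * F Set.univ := by gcongr; exact Measure.lintegral_rnDeriv_le

lemma Jplus_le_tiltKL (F Ftil : Measure X) [IsFiniteMeasure F] [IsProbabilityMeasure Ftil]
    (A : Set X) {D : Set X} (hD : MeasurableSet D) {ε : ℝ} (hε : 0 < ε)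
    (h : (1 + ε) * Ftil.real D ≤ 1) :
    Jplus F Ftil A ε D ≤ ENNReal.ofReal (tiltKL ε (Ftil.real D)) := by
  set s := Ftil.real D
  have hs1 : s < 1 := by nlinarith [measureReal_nonneg (μ := Ftil) (s := D)]
  set c := (1 - (1 + ε) * s) / (1 - s)
  have hc : c * (1 - s) = 1 - (1 + ε) * s := div_mul_cancel₀ _ (by linarith)
  have hc0 : 0 ≤ c := div_nonneg (by linarith) (by linarith)
  have hc1 : c ≤ 1 + ε := by rw [div_le_iff₀ (by linarith)]; nlinarith
  set G := stepMeasure Ftil D (1 + ε) c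
  have : IsProbabilityMeasure G := ⟨by
    rw [stepMeasure_univ hD (by linarith) hc0, probReal_compl_eq_one_sub hD, hc, add_sub_cancel,
      ENNReal.ofReal_one]⟩
  obtain ⟨hint, hintegral⟩ := integral_llr_stepMeasure (ν := Ftil) (a := 1 + ε) hD (by linarith) hc0
  have htilt : tiltKL ε s = (1 + ε) * s * Real.log (1 + ε) + c * (1 - s) * Real.log c := by
    rw [hc]; rfl
  have hKL : KL G Ftil = ENNReal.ofReal (tiltKL ε s) := by
    rw [KL_of_ac_of_integrable (G := G) (withDensity_absolutelyContinuous _ _) hint, hintegral,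
      probReal_compl_eq_one_sub hD, htilt]
    congr 1
    simp only [s]
    ring
  have hcons : ∀ᵐ x ∂Ftil, x ∈ D → 1 + ε ≤ (G.rnDeriv Ftil x).toReal := by
    filter_upwards [toReal_rnDeriv_stepMeasure (a := 1 + ε) hD (by linarith) hc0] with x hx hxD
    rw [hx, if_pos hxD]
  have hGamma : ∫⁻ x, ENNReal.ofReal (wf F Ftil A x) ∂G ≠ ⊤ :=
    lintegral_ofReal_wf_ne_top F Ftil A ENNReal.ofReal_ne_top (stepMeasure_le_smul hc1)
  exact sInf_le ⟨G, ⟨inferInstance, hGamma, hKL ▸ ENNReal.ofReal_ne_top⟩, hcons, hKL.symm⟩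

lemma measure_le_measure_iff_measure_diff_le {μ : Measure X} [IsFiniteMeasure μ] {s t : Set X}
    (hs : MeasurableSet s) (ht : MeasurableSet t) : μ s ≤ μ t ↔ μ (s \ t) ≤ μ (t \ s) := by
  rw [← measure_inter_add_sdiff s ht, ← measure_inter_add_sdiff t hs, Set.inter_comm,
    ENNReal.add_le_add_iff_left (measure_ne_top μ _)]

lemma measurableSet_Ct (F Ftil : Measure X) {A : Set X} (hA : MeasurableSet A) (t : ℝ) :
    MeasurableSet (Ct F Ftil A t) :=
  hA.inter (Measure.measurable_rnDeriv F Ftil measurableSet_Ici)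

lemma ofReal_mul_le_of_subset_Ct (F Ftil : Measure X) {A S : Set X} {t : ℝ}
    (hS : S ⊆ Ct F Ftil A t) : ENNReal.ofReal t * Ftil S ≤ F S :=
  calc ENNReal.ofReal t * Ftil S = ∫⁻ _ in S, ENNReal.ofReal t ∂Ftil := by
        rw [setLIntegral_const, mul_comm]
    _ ≤ ∫⁻ x in S, F.rnDeriv Ftil x ∂Ftil :=
        setLIntegral_mono (Measure.measurable_rnDeriv F Ftil) fun x hx => (hS hx).2
    _ ≤ F S := Measure.setLIntegral_rnDeriv_le S

lemma le_ofReal_mul_of_disjoint_Ct (F Ftil : Measure X) [SigmaFinite F] [SigmaFinite Ftil]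
    {A S : Set X} (hA : MeasurableSet A) (hac : F.restrict A ≪ Ftil) (hS : MeasurableSet S)
    (hSA : S ⊆ A) {t : ℝ} (hSCt : Disjoint S (Ct F Ftil A t)) :
    F S ≤ ENNReal.ofReal t * Ftil S := by
  rw [← Measure.restrict_eq_self F hSA, ← Measure.setLIntegral_rnDeriv' hac hS]
  calc ∫⁻ x in S, (F.restrict A).rnDeriv Ftil x ∂Ftil
      = ∫⁻ x in S, A.indicator (F.rnDeriv Ftil) x ∂Ftil :=
        lintegral_congr_ae (ae_restrict_of_ae (Measure.rnDeriv_restrict F Ftil hA))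
    _ ≤ ∫⁻ _ in S, ENNReal.ofReal t ∂Ftil := by
        refine setLIntegral_mono measurable_const fun x hx => ?_
        rw [Set.indicator_of_mem (hSA hx)]
        exact le_of_not_ge fun hge => hSCt.ne_of_mem hx ⟨hSA hx, hge⟩ rfl
    _ = ENNReal.ofReal t * Ftil S := by rw [setLIntegral_const, mul_comm]

/-- The Neyman–Pearson lemma. -/
lemma measure_Ct_le_of_measure_le (F Ftil : Measure X) [IsFiniteMeasure F]
    [IsFiniteMeasure Ftil] {A : Set X} (hA : MeasurableSet A) (hac : F.restrict A ≪ Ftil)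
    {t : ℝ} (ht : 0 < t) {C : Set X} (hC : MeasurableSet C) (hCA : C ⊆ A)
    (hFC : F (Ct F Ftil A t) ≤ F C) : Ftil (Ct F Ftil A t) ≤ Ftil C := by
  have hCt := measurableSet_Ct F Ftil hA t
  rw [measure_le_measure_iff_measure_diff_le hCt hC] at hFC ⊢
  refine (ENNReal.mul_le_mul_iff_right (ENNReal.ofReal_pos.2 ht).ne' ENNReal.ofReal_ne_top).1 ?_
  calc ENNReal.ofReal t * Ftil (Ct F Ftil A t \ C)
      ≤ F (Ct F Ftil A t \ C) := ofReal_mul_le_of_subset_Ct F Ftil Set.sdiff_subset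
    _ ≤ F (C \ Ct F Ftil A t) := hFC
    _ ≤ ENNReal.ofReal t * Ftil (C \ Ct F Ftil A t) :=
        le_ofReal_mul_of_disjoint_Ct F Ftil hA hac (hC.diff hCt) (Set.sdiff_subset.trans hCA)
          Set.disjoint_sdiff_left

end

theorem stmt6_general {X : Type*} [MeasurableSpace X]
    (F Ftil : Measure X) [IsProbabilityMeasure F] [IsProbabilityMeasure Ftil]
    (A : Set X) (hA : MeasurableSet A) (hac : F.restrict A ≪ Ftil)
    (ε δ : ℝ) (hε : 0 < ε)
    (ttil : ℝ) (httil : 0 < ttil) (hlevel : F (Ct F Ftil A ttil) = ENNReal.ofReal δ) :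
    (⨅ C : {C : Set X // C ⊆ A ∧ MeasurableSet C ∧ ENNReal.ofReal δ ≤ F C},
        Jplus F Ftil A ε C.1)
      = Jplus F Ftil A ε (Ct F Ftil A ttil) := by
  have hD := measurableSet_Ct F Ftil hA ttil
  refine le_antisymm (iInf_le_of_le ⟨_, fun x hx => hx.1, hD, hlevel.ge⟩ le_rfl) (le_iInf ?_)
  rintro ⟨C, hCA, hC, hδC⟩
  have hNP : Ftil.real (Ct F Ftil A ttil) ≤ Ftil.real C := ENNReal.toReal_mono (measure_ne_top _ _)
    (measure_Ct_le_of_measure_le F Ftil hA hac httil hC hCA (hlevel.trans_le hδC))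
  rcases le_or_gt ((1 + ε) * Ftil.real (Ct F Ftil A ttil)) 1 with h | h
  · exact (Jplus_le_tiltKL F Ftil A hD hε h).trans
      (tiltKL_le_Jplus F Ftil A hC hε measureReal_nonneg hNP)
  · rw [Jplus_eq_top F Ftil A hC (h.trans_le (by gcongr))]
    exact le_top

theorem stmt6 {X : Type*} [MeasurableSpace X] [MetricSpace X] [CompleteSpace X]
    [TopologicalSpace.SeparableSpace X] [BorelSpace X]
    (F Ftil : Measure X) [IsProbabilityMeasure F] [IsProbabilityMeasure Ftil]
    (A : Set X) (hA : MeasurableSet A) (hac : F.restrict A ≪ Ftil)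
    (ε δ : ℝ) (hε : 0 < ε) (hδ : 0 < δ)
    (ttil : ℝ) (httil : 0 < ttil) (hlevel : F (Ct F Ftil A ttil) = ENNReal.ofReal δ) :
    (⨅ C : {C : Set X // C ⊆ A ∧ MeasurableSet C ∧ ENNReal.ofReal δ ≤ F C},
        Jplus F Ftil A ε C.1)
      = Jplus F Ftil A ε (Ct F Ftil A ttil) :=
  stmt6_general F Ftil A hA hac ε δ hε ttil httil hlevel
end
end

section
/- Let F be a probability measure on 𝒳, B ⊆ 𝒳 measurable, α ∈ (0,1), and p = F(B) with 0 < p ≤ α. Then inf{ H(G∣F) : G a probability measure on 𝒳 with G(B) ≥ α } = α·log(α/p) + (1−α)·log((1−α)/(1−p)), i.e., the infimum equals the relative entropy between a Bernoulli(α) and a Bernoulli(p) distribution. -/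
open MeasureTheory Filter Topology ENNReal
open scoped Classical

noncomputable section

/-!
The infimum is attained at the exponential tilt `G₀ = F.tilted φ` with `φ = log (α / p)` on `B`
and `φ = log ((1 - α) / (1 - p))` off `B`: then `∫ exp φ dF = 1`, `G₀ B = α`, and
`H(G₀ ∣ F) = ∫ φ dG₀` is the Bernoulli divergence. For any other `G`, the Donsker–Varadhan
bound `H(G ∣ F) ≥ ∫ φ dG - log ∫ exp φ dF` gives
`H(G ∣ F) ≥ t log (α / p) + (1 - t) log ((1 - α) / (1 - p))` with `t = G B ≥ α`, and this is
increasing in `t` since `α / p ≥ 1 ≥ (1 - α) / (1 - p)`.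
-/

open InformationTheory

section KLDivergence

variable {X : Type*} [MeasurableSpace X] {μ ν : Measure X} {f : X → ℝ}

lemma KL_eq_klDiv [IsProbabilityMeasure μ] [IsProbabilityMeasure ν] : KL μ ν = klDiv μ ν := by
  by_cases h : μ ≪ ν ∧ Integrable (llr μ ν) μ
  · rw [KL, ← llr_def, if_pos h, klDiv_of_ac_of_integrable h.1 h.2]
    simp
  · rw [KL, ← llr_def, if_neg h, eq_comm, klDiv_eq_top_iff]
    exact fun hμν hint => h ⟨hμν, hint⟩

/-- Donsker–Varadhan: Gibbs' inequality for `klDiv μ (ν.tilted f)`. -/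
lemma ofReal_integral_sub_log_integral_exp_le_klDiv [IsProbabilityMeasure μ]
    [IsProbabilityMeasure ν] (hfμ : Integrable f μ)
    (hfν : Integrable (fun x ↦ Real.exp (f x)) ν) :
    ENNReal.ofReal (∫ x, f x ∂μ - Real.log (∫ x, Real.exp (f x) ∂ν)) ≤ klDiv μ ν := by
  by_cases h : μ ≪ ν ∧ Integrable (llr μ ν) μ
  · obtain ⟨hμν, h_int⟩ := h
    have := isProbabilityMeasure_tilted hfν
    have hgibbs := integral_llr_add_sub_measure_univ_nonneg
      (hμν.trans (absolutelyContinuous_tilted hfν))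
      (integrable_llr_tilted_right hμν hfμ h_int hfν)
    rw [integral_llr_tilted_right hμν hfμ hfν h_int] at hgibbs
    rw [klDiv_of_ac_of_integrable hμν h_int]
    refine ENNReal.ofReal_le_ofReal ?_
    simp only [probReal_univ] at hgibbs ⊢
    linarith
  · rw [klDiv_eq_top_iff.mpr fun hμν hint => h ⟨hμν, hint⟩]
    exact le_top

lemma klDiv_tilted_self [IsProbabilityMeasure ν]
    (hfν : Integrable (fun x ↦ Real.exp (f x)) ν) (hf : Integrable f (ν.tilted f)) :
    klDiv (ν.tilted f) ν
      = ENNReal.ofReal (∫ x, f x ∂ν.tilted f - Real.log (∫ x, Real.exp (f x) ∂ν)) := by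
  have := isProbabilityMeasure_tilted hfν
  have hllr :
      llr (ν.tilted f) ν =ᵐ[ν.tilted f] fun x ↦ f x - Real.log (∫ x, Real.exp (f x) ∂ν) :=
    (tilted_absolutelyContinuous ν f).ae_le (log_rnDeriv_tilted_left_self hfν)
  rw [klDiv_of_ac_of_integrable (tilted_absolutelyContinuous ν f)
    ((integrable_congr hllr).mpr (hf.sub (integrable_const _))), integral_congr_ae hllr,
    integral_sub hf (integrable_const _)]
  simp

end KLDivergence

section BinaryTilt

variable {X : Type*} {B : Set X} {a p : ℝ}

/-- `log (dG₀/dF)` for the entropy minimiser `G₀ = F.tilted (binaryTilt B a p)`. -/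
def binaryTilt (B : Set X) (a p : ℝ) : X → ℝ :=
  B.piecewise (fun _ ↦ Real.log (a / p)) (fun _ ↦ Real.log ((1 - a) / (1 - p)))

lemma exp_binaryTilt (ha : a ∈ Set.Ioo 0 1) (hp : p ∈ Set.Ioo 0 1) (x : X) :
    Real.exp (binaryTilt B a p x)
      = B.piecewise (fun _ ↦ a / p) (fun _ ↦ (1 - a) / (1 - p)) x := by
  obtain ⟨ha0, ha1⟩ := ha
  obtain ⟨hp0, hp1⟩ := hp
  unfold binaryTilt Set.piecewise
  split_ifs
  · exact Real.exp_log (by positivity)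
  · exact Real.exp_log (div_pos (by linarith) (by linarith))

variable [MeasurableSpace X] {μ : Measure X}

lemma integral_piecewise_const [IsProbabilityMeasure μ] (hB : MeasurableSet B) (c d : ℝ) :
    ∫ x, B.piecewise (fun _ ↦ c) (fun _ ↦ d) x ∂μ = μ.real B * c + (1 - μ.real B) * d := by
  rw [integral_piecewise hB (integrable_const c).integrableOn (integrable_const d).integrableOn,
    setIntegral_const, setIntegral_const, probReal_compl_eq_one_sub hB, smul_eq_mul, smul_eq_mul]

lemma integrable_binaryTilt [IsFiniteMeasure μ] (hB : MeasurableSet B) :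
    Integrable (binaryTilt B a p) μ :=
  .piecewise hB (integrable_const _).integrableOn (integrable_const _).integrableOn

lemma integral_binaryTilt [IsProbabilityMeasure μ] (hB : MeasurableSet B) :
    ∫ x, binaryTilt B a p x ∂μ
      = μ.real B * Real.log (a / p) + (1 - μ.real B) * Real.log ((1 - a) / (1 - p)) :=
  integral_piecewise_const hB _ _

lemma integrable_exp_binaryTilt [IsFiniteMeasure μ] (hB : MeasurableSet B)
    (ha : a ∈ Set.Ioo 0 1) (hp : p ∈ Set.Ioo 0 1) :
    Integrable (fun x ↦ Real.exp (binaryTilt B a p x)) μ := by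
  simp_rw [exp_binaryTilt ha hp]
  exact .piecewise hB (integrable_const _).integrableOn (integrable_const _).integrableOn

lemma integral_exp_binaryTilt [IsProbabilityMeasure μ] (hB : MeasurableSet B)
    (ha : a ∈ Set.Ioo 0 1) (hp : p ∈ Set.Ioo 0 1) (hμB : μ.real B = p) :
    ∫ x, Real.exp (binaryTilt B a p x) ∂μ = 1 := by
  simp_rw [exp_binaryTilt ha hp]
  rw [integral_piecewise_const hB, hμB]
  field_simp [hp.1.ne', (sub_pos.mpr hp.2).ne']
  ring

lemma tilted_binaryTilt_apply [IsProbabilityMeasure μ] (hB : MeasurableSet B)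
    (ha : a ∈ Set.Ioo 0 1) (hp : p ∈ Set.Ioo 0 1) (hμB : μ.real B = p) :
    μ.tilted (binaryTilt B a p) B = ENNReal.ofReal a := by
  rw [tilted_apply_eq_ofReal_integral' _ hB, integral_exp_binaryTilt hB ha hp hμB]
  simp_rw [div_one, exp_binaryTilt ha hp]
  rw [setIntegral_congr_fun (g := fun _ ↦ a / p) hB fun x hx ↦ Set.piecewise_eq_of_mem B _ _ hx,
    setIntegral_const, hμB, smul_eq_mul, mul_div_cancel₀ _ hp.1.ne']

lemma klDiv_tilted_binaryTilt [IsProbabilityMeasure μ] (hB : MeasurableSet B)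
    (ha : a ∈ Set.Ioo 0 1) (hp : p ∈ Set.Ioo 0 1) (hμB : μ.real B = p) :
    klDiv (μ.tilted (binaryTilt B a p)) μ
      = ENNReal.ofReal (a * Real.log (a / p) + (1 - a) * Real.log ((1 - a) / (1 - p))) := by
  have := isProbabilityMeasure_tilted (integrable_exp_binaryTilt (μ := μ) hB ha hp)
  rw [klDiv_tilted_self (integrable_exp_binaryTilt hB ha hp) (integrable_binaryTilt hB),
    integral_exp_binaryTilt hB ha hp hμB, Real.log_one, sub_zero, integral_binaryTilt hB,
    measureReal_def, tilted_binaryTilt_apply hB ha hp hμB, ENNReal.toReal_ofReal ha.1.le]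

lemma ofReal_binaryKL_le_klDiv {ν : Measure X} [IsProbabilityMeasure μ] [IsProbabilityMeasure ν]
    (hB : MeasurableSet B) (ha : a ∈ Set.Ioo 0 1) (hp : p ∈ Set.Ioo 0 1) (hpa : p ≤ a)
    (hνB : ν.real B = p) (hμB : a ≤ μ.real B) :
    ENNReal.ofReal (a * Real.log (a / p) + (1 - a) * Real.log ((1 - a) / (1 - p)))
      ≤ klDiv μ ν := by
  have hlog_in : 0 ≤ Real.log (a / p) := Real.log_nonneg ((one_le_div hp.1).mpr hpa)
  have hlog_out : Real.log ((1 - a) / (1 - p)) ≤ 0 :=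
    Real.log_nonpos (div_nonneg (by linarith [ha.2]) (by linarith [hp.2]))
      ((div_le_one (by linarith [hp.2])).mpr (by linarith))
  calc ENNReal.ofReal (a * Real.log (a / p) + (1 - a) * Real.log ((1 - a) / (1 - p)))
      ≤ ENNReal.ofReal (∫ x, binaryTilt B a p x ∂μ
          - Real.log (∫ x, Real.exp (binaryTilt B a p x) ∂ν)) := by
        refine ENNReal.ofReal_le_ofReal ?_
        rw [integral_binaryTilt hB, integral_exp_binaryTilt hB ha hp hνB, Real.log_one, sub_zero]
        nlinarith [mul_nonneg (sub_nonneg.mpr hμB) (sub_nonneg.mpr (hlog_out.trans hlog_in))]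
    _ ≤ klDiv μ ν := ofReal_integral_sub_log_integral_exp_le_klDiv
        (integrable_binaryTilt hB) (integrable_exp_binaryTilt hB ha hp)

end BinaryTilt

theorem stmt13 {X : Type*} [MeasurableSpace X] (F : Measure X) [IsProbabilityMeasure F]
    (B : Set X) (hB : MeasurableSet B) (α p : ℝ) (hα : α ∈ Set.Ioo (0 : ℝ) 1)
    (hp : (F B).toReal = p) (hp0 : 0 < p) (hpα : p ≤ α) :
    sInf { r : ℝ≥0∞ | ∃ G : Measure X, IsProbabilityMeasure G ∧
        ENNReal.ofReal α ≤ G B ∧ r = KL G F }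
      = ENNReal.ofReal (α * Real.log (α / p) + (1 - α) * Real.log ((1 - α) / (1 - p))) := by
  have hFB : F.real B = p := hp
  have hp01 : p ∈ Set.Ioo 0 1 := ⟨hp0, hpα.trans_lt hα.2⟩
  have hφ := integrable_exp_binaryTilt (μ := F) hB hα hp01
  refine IsLeast.csInf_eq ⟨⟨F.tilted (binaryTilt B α p), isProbabilityMeasure_tilted hφ,
    (tilted_binaryTilt_apply hB hα hp01 hFB).ge, ?_⟩, ?_⟩
  · have := isProbabilityMeasure_tilted hφ
    rw [KL_eq_klDiv, klDiv_tilted_binaryTilt hB hα hp01 hFB]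
  · rintro _ ⟨G, hG, hGB, rfl⟩
    rw [KL_eq_klDiv]
    refine ofReal_binaryKL_le_klDiv hB hα hp01 hpα hFB ?_
    rwa [measureReal_def, ← ENNReal.ofReal_le_iff_le_toReal (measure_ne_top G B)]
end
end

section
/- Let F be a Borel probability measure on 𝒳, A ⊆ 𝒳 measurable, ε > 0, and δ ∈ (0,1) with (1+ε)δ < 1. Suppose there exists a measurable C ⊆ A with F(C) = δ. Then inf{ H(G∣F) : G a probability measure on 𝒳 such that for some measurable C' ⊆ A with F(C') ≥ δ, dG/dF ≥ 1+ε F-almost everywhere on C' } = γ⁺_ε(δ). -/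
open MeasureTheory Filter Topology ENNReal
open scoped Classical

noncomputable section

/-!
Both inequalities come from the Donsker–Varadhan bound `H(G ∣ F) ≥ ∫ f dG - log ∫ eᶠ dF`, applied
to `f = c 𝟙_{C'}` with `c = optimalTilt ε δ`: it gives
`H(G ∣ F) ≥ c G(C') - log ((eᶜ - 1) F(C') + 1)`. Under the constraint `G(C') ≥ (1 + ε) F(C')`,
`F(C') ≥ δ`, this is smallest at `F(C') = δ`, `G(C') = (1 + ε) δ`, where it equals `γ⁺_ε(δ)`.
The bound is an equality for the tilted measure `dG ∝ e^{c 𝟙_C} dF`, whose density is `1 + ε`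
on `C` and `(1 - (1 + ε) δ) / (1 - δ)` off `C`.
-/

section KL

variable {X : Type*} [MeasurableSpace X] {μ ν : Measure X}

lemma KL_of_ac_of_integrable_s14 (hμν : μ ≪ ν) (h_int : Integrable (llr μ ν) μ) :
    KL μ ν = ENNReal.ofReal (∫ x, llr μ ν x ∂μ) :=
  if_pos ⟨hμν, h_int⟩

lemma ofReal_le_KL {r : ℝ} (h : μ ≪ ν → Integrable (llr μ ν) μ → r ≤ ∫ x, llr μ ν x ∂μ) :
    ENNReal.ofReal r ≤ KL μ ν := by
  unfold KL
  split_ifs with hμν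
  · exact ENNReal.ofReal_le_ofReal (h hμν.1 hμν.2)
  · exact le_top

/-- **Donsker–Varadhan**: Gibbs' inequality for `μ` against the tilted measure `ν.tilted f`. -/
lemma integral_sub_log_integral_exp_le_integral_llr [IsProbabilityMeasure μ]
    [IsProbabilityMeasure ν] {f : X → ℝ} (hμν : μ ≪ ν) (hfμ : Integrable f μ)
    (hfν : Integrable (fun x ↦ Real.exp (f x)) ν) (h_int : Integrable (llr μ ν) μ) :
    ∫ x, f x ∂μ - Real.log (∫ x, Real.exp (f x) ∂ν) ≤ ∫ x, llr μ ν x ∂μ := by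
  have := isProbabilityMeasure_tilted hfν
  have hgibbs := InformationTheory.integral_llr_add_sub_measure_univ_nonneg
    (hμν.trans (absolutelyContinuous_tilted hfν))
    (integrable_llr_tilted_right hμν hfμ h_int hfν)
  rw [integral_llr_tilted_right hμν hfμ hfν h_int] at hgibbs
  simp only [probReal_univ] at hgibbs
  linarith

lemma integral_llr_tilted_self [IsProbabilityMeasure ν] {f : X → ℝ}
    (hfν : Integrable (fun x ↦ Real.exp (f x)) ν) (hf : Integrable f (ν.tilted f)) :
    ∫ x, llr (ν.tilted f) ν x ∂(ν.tilted f)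
      = ∫ x, f x ∂(ν.tilted f) - Real.log (∫ x, Real.exp (f x) ∂ν) := by
  have := isProbabilityMeasure_tilted hfν
  calc ∫ x, llr (ν.tilted f) ν x ∂(ν.tilted f)
      = ∫ x, f x - Real.log (∫ x, Real.exp (f x) ∂ν) ∂(ν.tilted f) := integral_congr_ae
        ((tilted_absolutelyContinuous ν f).ae_le (log_rnDeriv_tilted_left_self hfν))
    _ = ∫ x, f x ∂(ν.tilted f) - Real.log (∫ x, Real.exp (f x) ∂ν) := by
      rw [integral_sub hf (integrable_const _)]
      simp

end KL

lemma exp_indicator_const {X : Type*} (s : Set X) (c : ℝ) :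
    (fun x ↦ Real.exp (s.indicator (fun _ ↦ c) x))
      = fun x ↦ s.indicator (fun _ ↦ Real.exp c - 1) x + 1 := by
  funext x
  by_cases hx : x ∈ s <;> simp [hx]

section IndicatorTilt

variable {X : Type*} [MeasurableSpace X] {μ ν : Measure X} {s : Set X}

lemma integrable_exp_indicator_const [IsFiniteMeasure ν] (hs : MeasurableSet s) (c : ℝ) :
    Integrable (fun x ↦ Real.exp (s.indicator (fun _ ↦ c) x)) ν := by
  rw [exp_indicator_const]
  exact ((integrable_const _).indicator hs).add (integrable_const 1)

lemma integral_exp_indicator_const [IsProbabilityMeasure ν] (hs : MeasurableSet s) (c : ℝ) :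
    ∫ x, Real.exp (s.indicator (fun _ ↦ c) x) ∂ν = (Real.exp c - 1) * ν.real s + 1 := by
  rw [exp_indicator_const, integral_add ((integrable_const _).indicator hs) (integrable_const 1),
    integral_indicator_const _ hs]
  simp [mul_comm]

/-- The Donsker–Varadhan value `c μ(s) - log ∫ exp (c 𝟙_s) dν` of the test function `c 𝟙_s`,
as a function of `a = μ(s)` and `b = ν(s)`. -/
def dvIndicator (c a b : ℝ) : ℝ := c * a - Real.log ((Real.exp c - 1) * b + 1)

lemma dvIndicator_le_integral_llr [IsProbabilityMeasure μ] [IsProbabilityMeasure ν]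
    (hμν : μ ≪ ν) (h_int : Integrable (llr μ ν) μ) (hs : MeasurableSet s) (c : ℝ) :
    dvIndicator c (μ.real s) (ν.real s) ≤ ∫ x, llr μ ν x ∂μ := by
  have h := integral_sub_log_integral_exp_le_integral_llr hμν
    ((integrable_const c).indicator hs) (integrable_exp_indicator_const hs c) h_int
  rwa [integral_exp_indicator_const hs, integral_indicator_const _ hs, smul_eq_mul,
    mul_comm] at h

lemma rnDeriv_tilted_indicator_const [IsProbabilityMeasure ν] (hs : MeasurableSet s) (c : ℝ) :
    (ν.tilted (s.indicator fun _ ↦ c)).rnDeriv ν =ᵐ[ν] fun x ↦ ENNReal.ofReal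
      (Real.exp (s.indicator (fun _ ↦ c) x) / ((Real.exp c - 1) * ν.real s + 1)) := by
  rw [← integral_exp_indicator_const hs c]
  exact rnDeriv_tilted_left_self ((measurable_const.indicator hs).aemeasurable)

lemma measureReal_tilted_indicator_const [IsProbabilityMeasure ν] (hs : MeasurableSet s)
    (c : ℝ) : (ν.tilted (s.indicator fun _ ↦ c)).real s
      = Real.exp c * ν.real s / ((Real.exp c - 1) * ν.real s + 1) := by
  rw [measureReal_def, tilted_apply_eq_ofReal_integral' _ hs,
    setIntegral_congr_fun hs fun x hx ↦ by rw [Set.indicator_of_mem hx], setIntegral_const,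
    ENNReal.toReal_ofReal (by positivity), integral_exp_indicator_const hs]
  simp only [smul_eq_mul]
  ring

lemma KL_tilted_indicator_const [IsProbabilityMeasure ν] (hs : MeasurableSet s) (c : ℝ) :
    KL (ν.tilted (s.indicator fun _ ↦ c)) ν
      = ENNReal.ofReal (dvIndicator c ((ν.tilted (s.indicator fun _ ↦ c)).real s) (ν.real s)) := by
  have hexp := integrable_exp_indicator_const (ν := ν) hs c
  have := isProbabilityMeasure_tilted hexp
  have hind : Integrable (s.indicator fun _ ↦ c) (ν.tilted (s.indicator fun _ ↦ c)) :=
    (integrable_const c).indicator hs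
  have h_int : Integrable (llr (ν.tilted (s.indicator fun _ ↦ c)) ν)
      (ν.tilted (s.indicator fun _ ↦ c)) :=
    (integrable_congr ((tilted_absolutelyContinuous ν _).ae_le
      (log_rnDeriv_tilted_left_self hexp))).2 (hind.sub (integrable_const _))
  rw [KL_of_ac_of_integrable_s14 (tilted_absolutelyContinuous ν _) h_int,
    integral_llr_tilted_self hexp hind, integral_indicator_const _ hs,
    integral_exp_indicator_const hs, smul_eq_mul, mul_comm, dvIndicator]

lemma mul_measureReal_le_of_le_rnDeriv_s14 [IsFiniteMeasure μ] {κ : ℝ} (hκ : 0 ≤ κ)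
    (hs : MeasurableSet s) (h : ∀ᵐ x ∂ν, x ∈ s → κ ≤ (μ.rnDeriv ν x).toReal) :
    κ * ν.real s ≤ μ.real s := by
  have hmeas : ENNReal.ofReal κ * ν s ≤ μ s :=
    calc ENNReal.ofReal κ * ν s = ∫⁻ _ in s, ENNReal.ofReal κ ∂ν := (setLIntegral_const _ _).symm
      _ ≤ ∫⁻ x in s, μ.rnDeriv ν x ∂ν := by
        refine lintegral_mono_ae ((ae_restrict_iff' hs).2 ?_)
        filter_upwards [h] with x hx hxs
        exact ENNReal.ofReal_le_of_le_toReal (hx hxs)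
      _ ≤ μ s := Measure.setLIntegral_rnDeriv_le s
  simpa [measureReal_def, ENNReal.toReal_mul, hκ] using
    ENNReal.toReal_mono (measure_ne_top μ s) hmeas

end IndicatorTilt

/-- On the left, `eᶜ b / Z` with `Z = (eᶜ - 1) b + 1` is the mass of `s` under `ν.tilted (c 𝟙_s)`
when `ν(s) = b`. As `c ≥ 0`, increasing `a'` only helps, and
`b' ↦ c (eᶜ / Z) b' - log ((eᶜ - 1) b' + 1)` is convex with slope `(c eᶜ - (eᶜ - 1)) / Z ≥ 0` at `b` (this is `1 - e⁻ᶜ ≤ c`). -/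
lemma dvIndicator_le_dvIndicator_of_tilt {c b a' b' : ℝ} (hc : 0 ≤ c) (hb : 0 ≤ b) (hbb' : b ≤ b')
    (ha' : Real.exp c / ((Real.exp c - 1) * b + 1) * b' ≤ a') :
    dvIndicator c (Real.exp c * b / ((Real.exp c - 1) * b + 1)) b ≤ dvIndicator c a' b' := by
  set R := Real.exp c
  set Z := (R - 1) * b + 1
  set Z' := (R - 1) * b' + 1
  have hR : 1 ≤ R := Real.one_le_exp hc
  have hZ : 0 < Z := by nlinarith
  have hZ' : 0 < Z' := by nlinarith
  have hRc : R - 1 ≤ c * R := by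
    have := Real.add_one_le_exp (-c)
    rw [Real.exp_neg] at this
    field_simp at this
    linarith
  have hlog : Real.log Z' - Real.log Z ≤ (R - 1) * (b' - b) / Z := by
    rw [← Real.log_div hZ'.ne' hZ.ne']
    refine (Real.log_le_sub_one_of_pos (by positivity)).trans (le_of_eq ?_)
    field_simp
    ring
  have hslope : (R - 1) * (b' - b) / Z ≤ c * (R / Z * b' - R * b / Z) := by
    rw [show c * (R / Z * b' - R * b / Z) = c * R * (b' - b) / Z by ring]
    gcongr
  have : c * (R / Z * b') ≤ c * a' := mul_le_mul_of_nonneg_left ha' hc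
  unfold dvIndicator
  linarith

section OptimalTilt

variable {ε δ : ℝ}

/-- The tilt `c` for which `exp (c 𝟙_C) dF / ∫ exp (c 𝟙_C) dF` equals `1 + ε` on `C`
when `F(C) = δ`. -/
def optimalTilt (ε δ : ℝ) : ℝ := Real.log ((1 + ε) * (1 - δ) / (1 - (1 + ε) * δ))

lemma exp_optimalTilt (hε : 0 ≤ ε) (hδ : δ < 1) (hεδ : (1 + ε) * δ < 1) :
    Real.exp (optimalTilt ε δ) = (1 + ε) * (1 - δ) / (1 - (1 + ε) * δ) :=
  Real.exp_log (div_pos (mul_pos (by linarith) (by linarith)) (by linarith))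

lemma optimalTilt_nonneg (hε : 0 ≤ ε) (hεδ : (1 + ε) * δ < 1) : 0 ≤ optimalTilt ε δ :=
  Real.log_nonneg <| (one_le_div (by linarith)).2 (by nlinarith)

lemma exp_optimalTilt_sub_one_mul_add_one (hε : 0 ≤ ε) (hδ : δ < 1)
    (hεδ : (1 + ε) * δ < 1) :
    (Real.exp (optimalTilt ε δ) - 1) * δ + 1 = (1 - δ) / (1 - (1 + ε) * δ) := by
  have hu : 0 < 1 - (1 + ε) * δ := by linarith
  rw [exp_optimalTilt hε hδ hεδ]
  field_simp
  ring

lemma exp_optimalTilt_div (hε : 0 ≤ ε) (hδ : δ < 1) (hεδ : (1 + ε) * δ < 1) :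
    Real.exp (optimalTilt ε δ) / ((Real.exp (optimalTilt ε δ) - 1) * δ + 1) = 1 + ε := by
  have hu : 0 < 1 - (1 + ε) * δ := by linarith
  have hv : 0 < 1 - δ := by linarith
  rw [exp_optimalTilt_sub_one_mul_add_one hε hδ hεδ, exp_optimalTilt hε hδ hεδ]
  field_simp

lemma gammaPlus_eq_dvIndicator_optimalTilt (hε : 0 ≤ ε) (hδ : δ < 1) (hεδ : (1 + ε) * δ < 1) :
    gammaPlus ε δ = dvIndicator (optimalTilt ε δ)
      (Real.exp (optimalTilt ε δ) * δ / ((Real.exp (optimalTilt ε δ) - 1) * δ + 1)) δ := by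
  have hu : 0 < 1 - (1 + ε) * δ := by linarith
  have hv : 0 < 1 - δ := by linarith
  rw [mul_div_right_comm, exp_optimalTilt_div hε hδ hεδ, dvIndicator,
    exp_optimalTilt_sub_one_mul_add_one hε hδ hεδ, gammaPlus,
    optimalTilt, Real.log_div (by positivity) hu.ne', Real.log_mul (by linarith) hv.ne',
    Real.log_div hv.ne' hu.ne', Real.log_div hu.ne' hv.ne']
  ring

end OptimalTilt

theorem stmt14_general {X : Type*} [MeasurableSpace X]
    (F : Measure X) [IsProbabilityMeasure F]
    (A : Set X) (ε δ : ℝ) (hε : 0 < ε) (hδ : δ ∈ Set.Ioo (0 : ℝ) 1)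
    (hεδ : (1 + ε) * δ < 1)
    (hC : ∃ C, C ⊆ A ∧ MeasurableSet C ∧ F C = ENNReal.ofReal δ) :
    sInf { r : ℝ≥0∞ | ∃ G : Measure X, IsProbabilityMeasure G ∧
        (∃ C', C' ⊆ A ∧ MeasurableSet C' ∧ ENNReal.ofReal δ ≤ F C' ∧
          ∀ᵐ x ∂F, x ∈ C' → 1 + ε ≤ ((G.rnDeriv F) x).toReal) ∧ r = KL G F }
      = ENNReal.ofReal (gammaPlus ε δ) := by
  obtain ⟨C, hCA, hCm, hFC⟩ := hC
  obtain ⟨hδ0, hδ1⟩ := hδ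
  have hFC_real : F.real C = δ := by rw [measureReal_def, hFC, ENNReal.toReal_ofReal hδ0.le]
  have hγ := gammaPlus_eq_dvIndicator_optimalTilt hε.le hδ1 hεδ
  have hslope := exp_optimalTilt_div hε.le hδ1 hεδ
  set c := optimalTilt ε δ
  have hprob := isProbabilityMeasure_tilted (integrable_exp_indicator_const (ν := F) hCm c)
  refine le_antisymm (sInf_le ⟨_, hprob, ⟨C, hCA, hCm, hFC.ge, ?_⟩, ?_⟩) (le_sInf ?_)
  · filter_upwards [rnDeriv_tilted_indicator_const hCm c] with x hx hxC
    rw [hx, Set.indicator_of_mem hxC, hFC_real, hslope, ENNReal.toReal_ofReal (by linarith)]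
  · rw [KL_tilted_indicator_const hCm, measureReal_tilted_indicator_const hCm, hFC_real, hγ]
  · rintro r ⟨G, hG, ⟨C', -, hC'm, hFC', hGC'⟩, rfl⟩
    refine ofReal_le_KL fun hGF h_int ↦ ?_
    have hδC' : δ ≤ F.real C' := by
      simpa [measureReal_def, hδ0.le] using ENNReal.toReal_mono (measure_ne_top F C') hFC'
    have hmass := mul_measureReal_le_of_le_rnDeriv_s14 (by linarith) hC'm hGC'
    rw [hγ]
    exact (dvIndicator_le_dvIndicator_of_tilt (optimalTilt_nonneg hε.le hεδ) hδ0.le hδC'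
      (by rwa [hslope])).trans (dvIndicator_le_integral_llr hGF h_int hC'm c)

theorem stmt14 {X : Type*} [MeasurableSpace X] [MetricSpace X] [CompleteSpace X]
    [TopologicalSpace.SeparableSpace X] [BorelSpace X]
    (F : Measure X) [IsProbabilityMeasure F]
    (A : Set X) (hA : MeasurableSet A) (ε δ : ℝ) (hε : 0 < ε) (hδ : δ ∈ Set.Ioo (0 : ℝ) 1)
    (hεδ : (1 + ε) * δ < 1)
    (hC : ∃ C, C ⊆ A ∧ MeasurableSet C ∧ F C = ENNReal.ofReal δ) :
    sInf { r : ℝ≥0∞ | ∃ G : Measure X, IsProbabilityMeasure G ∧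
        (∃ C', C' ⊆ A ∧ MeasurableSet C' ∧ ENNReal.ofReal δ ≤ F C' ∧
          ∀ᵐ x ∂F, x ∈ C' → 1 + ε ≤ ((G.rnDeriv F) x).toReal) ∧ r = KL G F }
      = ENNReal.ofReal (gammaPlus ε δ) :=
  stmt14_general F A ε δ hε hδ hεδ hC
end
end
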